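/- Let π be a set of primes, T a finite semigroup, and S = CP_π(T) the smallest subsemigroup of P(T) containing singletons and closed under Z ↦ Z^{ω+*} whenever Z generates a cyclic π'-group. Suppose B : S → S satisfies: B(s) = s if s is π'-free; B(s) <_H s otherwise; s ⊆ B(s); and there is a map s ↦ m_s with B(s) = s·m_s and m_s = m_{s'} whenever s L s'. Then the composition of two such operators B, B' is again such an operator, with right multiplier m_s · n_{s·m_s} (where n is the multiplier family of B'). In particular the set of preblowup operators on S is a finite semigroup, and if nonempty it contains an idempotent (a blowup operator). -/

import Mathlib

open Pointwise

/-- Multiplication of an element of a semigroup `M` by an element of `M¹ = M` with an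
adjoined identity (modelled as `Option M`, `none` being the identity `I`). -/
def hmul {M : Type*} [Mul M] (h : M) : Option M → M := fun s => s.elim h (fun u => h * u)

/-- Multiplication in `M¹` (modelled as `Option M`). -/
def omul {M : Type*} [Mul M] : Option M → Option M → Option M
  | none, t => t
  | some a, none => some a
  | some a, some b => some (a * b)

/-- `mpow a n = aⁿ` for `n ≥ 1` (with the junk value `mpow a 0 = a`). -/
def mpow {M : Type*} [Mul M] (a : M) : ℕ → M
  | 0 => a
  | 1 => a
  | n+2 => mpow a (n+1) * a

/-- Green's preorder `a ≤_L b` iff `a ∈ M¹ b`. -/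
def leL {M : Type*} [Mul M] (a b : M) : Prop := a = b ∨ ∃ u, a = u * b
/-- Green's preorder `a ≤_R b` iff `a ∈ b M¹`. -/
def leR {M : Type*} [Mul M] (a b : M) : Prop := a = b ∨ ∃ u, a = b * u
/-- Green's `L`-equivalence. -/
def eqL {M : Type*} [Mul M] (a b : M) : Prop := leL a b ∧ leL b a
/-- Green's `R`-equivalence. -/
def eqR {M : Type*} [Mul M] (a b : M) : Prop := leR a b ∧ leR b a
/-- Green's `H`-equivalence. -/
def eqH {M : Type*} [Mul M] (a b : M) : Prop := eqL a b ∧ eqR a b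
/-- `a <_H b` : `a ≤_L b`, `a ≤_R b`, but `a` is not `H`-equivalent to `b`. -/
def ltH {M : Type*} [Mul M] (a b : M) : Prop := leL a b ∧ leR a b ∧ ¬ eqH a b

/-- The `H`-class of `a`, as a type. -/
def HclsT {M : Type*} [Mul M] (a : M) := {x : M // eqH x a}

/-- The (right) Schützenberger group of the `H`-class of `a`: the set of transformations of the
`H`-class of `a` induced by right multiplication by elements of the right stabilizer in `M¹`. -/
def gammaR {M : Type*} [Mul M] (a : M) : Set (HclsT a → HclsT a) :=
  {f | ∃ s : Option M, (∀ h : HclsT a, eqH (hmul h.1 s) a) ∧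
        ∀ h : HclsT a, (f h).1 = hmul h.1 s}

/-- An element is `π'`-free if the Schützenberger group of its (`J`-class, equivalently its)
`H`-class is a `π`-group: every prime dividing its order lies in `π`. -/
def piFree {M : Type*} [Mul M] (π : Set ℕ) (a : M) : Prop :=
  ∀ p : ℕ, p.Prime → p ∣ (gammaR a).ncard → p ∈ π

/-- Membership in `CP_π(T)`: the smallest subsemigroup of `P(T)` containing the singletons and
closed under `Z ↦ Z^{ω+*} = ⋃_{n ≥ 1} Zⁿ` whenever `Z` generates a cyclic `π'`-group
(i.e. `Z` is a group element of order `k` divisible only by primes outside `π`). -/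
inductive CPmem (π : Set ℕ) {T : Type} [Semigroup T] : Set T → Prop
  | single (t : T) : CPmem π {t}
  | mul {X Y : Set T} : CPmem π X → CPmem π Y → CPmem π (X * Y)
  | omega {Z : Set T} (k : ℕ) (hk : 0 < k) (hcyc : mpow Z (k+1) = Z)
      (hπ : ∀ p : ℕ, p.Prime → p ∣ k → p ∉ π) :
      CPmem π Z → CPmem π (⋃ n, mpow Z (n+1))

/-- The semigroup `CP_π(T)`, as a subsemigroup of `P(T)`. -/
def CPT (π : Set ℕ) (T : Type) [Semigroup T] : Type := {X : Set T // CPmem π X}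

noncomputable instance {π : Set ℕ} {T : Type} [Semigroup T] : Mul (CPT π T) :=
  ⟨fun a b => ⟨a.1 * b.1, CPmem.mul a.2 b.2⟩⟩

noncomputable instance {π : Set ℕ} {T : Type} [Semigroup T] : Semigroup (CPT π T) :=
  { (inferInstanceAs (Mul (CPT π T)) : Mul (CPT π T)) with
    mul_assoc := fun a b c => Subtype.ext (mul_assoc a.1 b.1 c.1) }

/-- A preblowup operator on `S = CP_π(T)`: `B` fixes `π'`-free elements, strictly `H`-decreases
non-`π'`-free elements, blows elements up (`s ⊆ B(s)` as subsets of `T`), and is given by right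
multiplication `B(s) = s·m_s` by multipliers `m_s ∈ S¹` constant on `L`-classes. -/
def IsPreblowup (π : Set ℕ) (T : Type) [Semigroup T]
    (B : CPT π T → CPT π T) (m : CPT π T → Option (CPT π T)) : Prop :=
  (∀ s, piFree π s → B s = s) ∧
  (∀ s, ¬ piFree π s → ltH (B s) s) ∧
  (∀ s, s.1 ⊆ (B s).1) ∧
  (∀ s, B s = hmul s (m s)) ∧
  (∀ s s', eqL s s' → m s = m s')

/-!
Each axiom of a preblowup operator is stable under composition: fixing is trivial, `<_H` is
transitive, inclusions compose, `(s·m_s)·n_{s·m_s} = s·(m_s·n_{s·m_s})`, and `L` is a right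
congruence, so `s L s'` gives `s·m_s L s'·m_{s'}` and the new multiplier is again constant on
`L`-classes. Preblowup operators thus form a subsemigroup of the finite monoid of self-maps of the
finite set `S`, which contains an idempotent as soon as it is nonempty.
-/

section Green

variable {M : Type*} [Semigroup M]

theorem leL_trans {a b c : M} (h1 : leL a b) (h2 : leL b c) : leL a c := by
  rcases h1 with rfl | ⟨u, rfl⟩ <;> rcases h2 with rfl | ⟨v, rfl⟩
  · exact Or.inl rfl
  · exact Or.inr ⟨v, rfl⟩
  · exact Or.inr ⟨u, rfl⟩
  · exact Or.inr ⟨u * v, (mul_assoc u v c).symm⟩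

theorem leR_trans {a b c : M} (h1 : leR a b) (h2 : leR b c) : leR a c := by
  rcases h1 with rfl | ⟨u, rfl⟩ <;> rcases h2 with rfl | ⟨v, rfl⟩
  · exact Or.inl rfl
  · exact Or.inr ⟨v, rfl⟩
  · exact Or.inr ⟨u, rfl⟩
  · exact Or.inr ⟨v * u, mul_assoc c v u⟩

theorem ltH_trans {a b c : M} (hab : ltH a b) (hbc : ltH b c) : ltH a c := by
  obtain ⟨hLab, hRab, -⟩ := hab
  obtain ⟨hLbc, hRbc, hHbc⟩ := hbc
  refine ⟨leL_trans hLab hLbc, leR_trans hRab hRbc, ?_⟩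
  rintro ⟨⟨-, hLca⟩, ⟨-, hRca⟩⟩
  exact hHbc ⟨⟨hLbc, leL_trans hLca hLab⟩, ⟨hRbc, leR_trans hRca hRab⟩⟩

theorem hmul_hmul (s : M) (u v : Option M) : hmul (hmul s u) v = hmul s (omul u v) := by
  cases u <;> cases v <;> simp [hmul, omul, mul_assoc]

theorem leL.hmul_right {a b : M} (h : leL a b) (u : Option M) : leL (hmul a u) (hmul b u) := by
  cases u with
  | none => exact h
  | some w =>
    rcases h with rfl | ⟨v, rfl⟩
    · exact Or.inl rfl
    · exact Or.inr ⟨v, mul_assoc v b w⟩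

theorem eqL.hmul_right {a b : M} (h : eqL a b) (u : Option M) : eqL (hmul a u) (hmul b u) :=
  ⟨h.1.hmul_right u, h.2.hmul_right u⟩

end Green

-- A finite semigroup is a compact Hausdorff semigroup for the discrete topology.
theorem exists_mul_self_eq_of_finite {M : Type*} [Semigroup M] [Finite M] (s : Set M)
    (hs : s.Nonempty) (hmul : ∀ x ∈ s, ∀ y ∈ s, x * y ∈ s) : ∃ e ∈ s, e * e = e := by
  let : TopologicalSpace M := ⊥
  have : DiscreteTopology M := ⟨rfl⟩
  exact exists_idempotent_in_compact_subsemigroup (fun _ => continuous_of_discreteTopology)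
    s hs s.toFinite.isCompact hmul

instance {π : Set ℕ} {T : Type} [Semigroup T] [Finite T] : Finite (CPT π T) :=
  inferInstanceAs (Finite {X : Set T // CPmem π X})

theorem IsPreblowup.comp {π : Set ℕ} {T : Type} [Semigroup T]
    {B B' : CPT π T → CPT π T} {m n : CPT π T → Option (CPT π T)}
    (hB : IsPreblowup π T B m) (hB' : IsPreblowup π T B' n) :
    IsPreblowup π T (fun s => B' (B s)) (fun s => omul (m s) (n (B s))) := by
  obtain ⟨hfix, hlt, hsub, hmulB, hL⟩ := hB
  obtain ⟨hfix', hlt', hsub', hmulB', hL'⟩ := hB'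
  refine ⟨fun s hs => by simp only [hfix s hs, hfix' s hs], fun s hs => ?_,
    fun s => (hsub s).trans (hsub' (B s)), fun s => ?_, fun s s' hss' => ?_⟩
  · by_cases hBs : piFree π (B s)
    · simpa only [hfix' _ hBs] using hlt s hs
    · exact ltH_trans (hlt' _ hBs) (hlt s hs)
  · show B' (B s) = hmul s (omul (m s) (n (B s)))
    rw [hmulB' (B s), hmulB s]
    exact hmul_hmul s (m s) _
  · have hm : m s = m s' := hL s s' hss'
    have hBL : eqL (B s) (B s') := by
      rw [hmulB s, hmulB s', hm]
      exact hss'.hmul_right (m s')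
    simp only [hm, hL' _ _ hBL]

/-- The composition of two preblowup operators on `S = CP_π(T)` is a preblowup operator, with
right multiplier `m_s · n_{s·m_s}`.  In particular the set of preblowup operators on `S` is a
finite semigroup, and if it is nonempty it contains an idempotent: a blowup operator. -/
theorem stmt_12 (π : Set ℕ) (T : Type) [Semigroup T] [Fintype T]
    (B B' : CPT π T → CPT π T) (m n : CPT π T → Option (CPT π T))
    (hB : IsPreblowup π T B m) (hB' : IsPreblowup π T B' n) :
    IsPreblowup π T (fun s => B' (B s)) (fun s => omul (m s) (n (B s))) ∧
    Set.Finite {C : CPT π T → CPT π T | ∃ m', IsPreblowup π T C m'} ∧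
    ((∃ C m', IsPreblowup π T C m') →
      ∃ (C : CPT π T → CPT π T) (m' : CPT π T → Option (CPT π T)),
        IsPreblowup π T C m' ∧ ∀ s, C (C s) = C s) := by
  refine ⟨hB.comp hB', Set.toFinite _, ?_⟩
  rintro ⟨C, mC, hC⟩
  have : Finite (Function.End (CPT π T)) := inferInstanceAs (Finite (CPT π T → CPT π T))
  obtain ⟨E, ⟨mE, hE⟩, hEE⟩ := exists_mul_self_eq_of_finite
    {C : Function.End (CPT π T) | ∃ m', IsPreblowup π T C m'} ⟨C, mC, hC⟩
    (fun _ ⟨_, hD⟩ _ ⟨_, hD'⟩ => ⟨_, hD'.comp hD⟩)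
  exact ⟨E, mE, hE, congrFun hEE⟩
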